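/- (Compositionality of pushouts; group case of the paper's Corollary.) Assume G, A, B, C and all extension groups below are locally compact Hausdorff, (Σ, ι, p) is a compatible extension of G by A, and f : A → B and g : B → C are continuous G-equivariant group homomorphisms. If (Σ₁, f₁) is an f-pushout of (Σ, ι, p), (Σ₂, f₂) is a g-pushout of (Σ₁, ι₁, p₁), and (Σ₃, f₃) is a (g ∘ f)-pushout of (Σ, ι, p), then there exists an isomorphism of topological groups h : Σ₂ → Σ₃ such that h ∘ ι₂ = ι₃, p₃ ∘ h = p₂, and h ∘ f₂ ∘ f₁ = f₃. (That is, g₊(f₊Σ) is properly isomorphic to (g ∘ f)₊Σ.) -/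

import Mathlib

/-!
Both `g₊(f₊Σ)` and `(g ∘ f)₊Σ` are pushouts of `Σ` along `g ∘ f`, so it suffices that such
pushouts are unique. Every element of a pushout `Σ'` is a product `ι' c * f' σ`, and two such
products agree exactly when the pairs `(c, σ)` differ by `((g ∘ f) a, ι a)` for some `a : A`;
hence `ι₂ c * f₂ σ ↦ ι₃ c * f₃ σ` is a well-defined isomorphism of groups. Since `p` is open,
every element of `Σ'` near `1` is such a product with `c` near `0` and `σ` near `1`, which makes
the isomorphism continuous at `1`, hence continuous.
-/

open Topology

section Core

variable {G S A : Type*}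

/-- A compatible extension `A → S → G` of the topological group `G` by the
abelian topological group `A`, which carries an action of `G`:
`ι` is a continuous injective group homomorphism which is a homeomorphism onto
its image, `p` is a continuous open surjective homomorphism whose kernel is
exactly the image of `ι`, and conjugation in `S` induces the given action of
`G` on `A`. -/
structure IsCompatibleExtension
    [Group G] [TopologicalSpace G]
    [AddCommGroup A] [TopologicalSpace A] [DistribMulAction G A]
    [Group S] [TopologicalSpace S]
    (ι : A → S) (p : S →* G) : Prop where
  /-- The middle term is a topological group. -/
  topGroup : IsTopologicalGroup S
  /-- `ι` is a group homomorphism (from the additive group `A`). -/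
  ι_hom : ∀ a a', ι (a + a') = ι a * ι a'
  /-- `ι` is a homeomorphism onto its image (in particular continuous and
  injective). -/
  ι_embedding : IsEmbedding ι
  /-- `p` is continuous. -/
  p_cont : Continuous p
  /-- `p` is open. -/
  p_open : IsOpenMap p
  /-- `p` is surjective. -/
  p_surj : Function.Surjective p
  /-- The image of `ι` is exactly the kernel of `p`. -/
  range_ι : Set.range ι = ⇑p ⁻¹' {1}
  /-- The extension is compatible: conjugation induces the given `G`-action. -/
  compat : ∀ (σ : S) (a : A), σ * ι a * σ⁻¹ = ι (p σ • a)

/-- Given a compatible extension `(S, ι, p)` of `G` by `A` and a continuous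
`G`-equivariant homomorphism `f : A → B`, the pair `(S', f')` is an
`f`-pushout of `(S, ι, p)` if `(S', ι', p')` is a compatible extension of `G`
by `B` and `f' : S → S'` is a continuous homomorphism satisfying
`ι' ∘ f = f' ∘ ι` and `p' ∘ f' = p`. -/
structure IsPushout
    {G A B S S' : Type*} [Group G] [TopologicalSpace G]
    [AddCommGroup A] [TopologicalSpace A] [DistribMulAction G A]
    [AddCommGroup B] [TopologicalSpace B] [DistribMulAction G B]
    [Group S] [TopologicalSpace S] [Group S'] [TopologicalSpace S']
    (ι : A → S) (p : S →* G) (f : A → B)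
    (ι' : B → S') (p' : S' →* G) (f' : S → S') : Prop where
  /-- `(S', ι', p')` is a compatible extension of `G` by `B`. -/
  ext : IsCompatibleExtension ι' p'
  /-- `f'` is continuous. -/
  f'_cont : Continuous f'
  /-- `f'` is a group homomorphism. -/
  f'_hom : ∀ σ τ, f' (σ * τ) = f' σ * f' τ
  /-- `ι' ∘ f = f' ∘ ι`. -/
  comm_ι : ∀ a, ι' (f a) = f' (ι a)
  /-- `p' ∘ f' = p`. -/
  comm_p : ∀ σ, p' (f' σ) = p σ

end Core

namespace IsCompatibleExtension

variable {G A S : Type*} [Group G] [TopologicalSpace G]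
  [AddCommGroup A] [TopologicalSpace A] [DistribMulAction G A]
  [Group S] [TopologicalSpace S] {ι : A → S} {p : S →* G}

theorem ι_zero (hE : IsCompatibleExtension ι p) : ι 0 = 1 := by
  have h := hE.ι_hom 0 0
  rwa [add_zero, left_eq_mul] at h

theorem p_ι (hE : IsCompatibleExtension ι p) (a : A) : p (ι a) = 1 := by
  have h : ι a ∈ ⇑p ⁻¹' {1} := hE.range_ι ▸ Set.mem_range_self a
  exact h

theorem exists_ι_eq_of_p_eq_one (hE : IsCompatibleExtension ι p) {σ : S} (h : p σ = 1) :
    ∃ a, ι a = σ := by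
  have h' : σ ∈ Set.range ι := hE.range_ι ▸ h
  exact h'

end IsCompatibleExtension

namespace IsPushout

variable {G A B S S' : Type*} [Group G] [TopologicalSpace G]
  [AddCommGroup A] [TopologicalSpace A] [DistribMulAction G A]
  [AddCommGroup B] [TopologicalSpace B] [DistribMulAction G B]
  [Group S] [TopologicalSpace S] [Group S'] [TopologicalSpace S']
  {ι : A → S} {p : S →* G} {F : A → B} {ι' : B → S'} {p' : S' →* G} {F' : S → S'}

theorem f'_one (hP : IsPushout ι p F ι' p' F') : F' 1 = 1 := by
  have h := hP.f'_hom 1 1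
  rwa [mul_one, left_eq_mul] at h

theorem f'_mul_ι (hP : IsPushout ι p F ι' p' F') (σ : S) (b : B) :
    F' σ * ι' b = ι' (p σ • b) * F' σ := by
  rw [← hP.comm_p, ← hP.ext.compat, inv_mul_cancel_right]

theorem ι_mul_f'_mul_ι_mul_f' (hP : IsPushout ι p F ι' p' F') (b b' : B) (σ σ' : S) :
    ι' b * F' σ * (ι' b' * F' σ') = ι' (b + p σ • b') * F' (σ * σ') := by
  rw [hP.ext.ι_hom, hP.f'_hom, mul_assoc (ι' b), ← mul_assoc (F' σ), hP.f'_mul_ι]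
  group

theorem exists_ι_mul_f'_eq (hE : IsCompatibleExtension ι p) (hP : IsPushout ι p F ι' p' F')
    (τ : S') : ∃ b σ, ι' b * F' σ = τ := by
  obtain ⟨σ, hσ⟩ := hE.p_surj (p' τ)
  obtain ⟨b, hb⟩ := hP.ext.exists_ι_eq_of_p_eq_one (σ := τ * (F' σ)⁻¹) (by
    rw [map_mul, map_inv, hP.comm_p, hσ, mul_inv_cancel])
  exact ⟨b, σ, by rw [hb, inv_mul_cancel_right]⟩

theorem ι_mul_f'_eq_iff (hE : IsCompatibleExtension ι p) (hP : IsPushout ι p F ι' p' F')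
    {b b' : B} {σ σ' : S} :
    ι' b * F' σ = ι' b' * F' σ' ↔ ∃ a, σ = ι a * σ' ∧ b' = b + F a := by
  constructor
  · intro h
    obtain ⟨a, ha⟩ := hE.exists_ι_eq_of_p_eq_one (σ := σ * σ'⁻¹) (by
      simpa [hP.ext.p_ι, hP.comm_p, mul_inv_eq_one] using congrArg p' h)
    have hσ : σ = ι a * σ' := by rw [ha, inv_mul_cancel_right]
    refine ⟨a, hσ, hP.ext.ι_embedding.injective (mul_right_cancel (b := F' σ') ?_).symm⟩
    rw [← h, hσ, hP.f'_hom, ← hP.comm_ι, ← mul_assoc, ← hP.ext.ι_hom]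
  · rintro ⟨a, rfl, rfl⟩
    rw [hP.f'_hom, ← hP.comm_ι, ← mul_assoc, ← hP.ext.ι_hom]

theorem nhds_one_le_map_ι_mul_f' (hE : IsCompatibleExtension ι p)
    (hP : IsPushout ι p F ι' p' F') :
    𝓝 (1 : S') ≤ (𝓝 (0 : B) ×ˢ 𝓝 (1 : S)).map fun x => ι' x.1 * F' x.2 := by
  have := hP.ext.topGroup
  refine Filter.le_map fun s hs => ?_
  obtain ⟨U, hU, V, hV, hUV⟩ := Filter.mem_prod_iff.mp hs
  refine Filter.mem_of_superset ?_ (Set.image_mono hUV)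
  obtain ⟨W', hW', hW'U⟩ : ∃ W' ∈ 𝓝 (1 : S'), ι' ⁻¹' W' ⊆ U := by
    rwa [hP.ext.ι_embedding.nhds_eq_comap, hP.ext.ι_zero, Filter.mem_comap] at hU
  obtain ⟨W, hWo, hW1, hWW'⟩ := exists_open_nhds_one_mul_subset hW'
  have hV₀ : V ∩ (fun σ => (F' σ)⁻¹) ⁻¹' W ∈ 𝓝 (1 : S) := by
    refine Filter.inter_mem hV ((hP.f'_cont.inv).continuousAt.preimage_mem_nhds ?_)
    rw [Pi.inv_apply, hP.f'_one, inv_one]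
    exact hWo.mem_nhds hW1
  -- `τ` close to `1` lies over some `p σ` with `σ` close to `1`, and `τ * (F' σ)⁻¹` is then
  -- a point of the kernel close to `1`.
  have hτ : p' ⁻¹' (p '' (V ∩ (fun σ => (F' σ)⁻¹) ⁻¹' W)) ∩ W ∈ 𝓝 (1 : S') := by
    refine Filter.inter_mem (hP.ext.p_cont.continuousAt.preimage_mem_nhds ?_) (hWo.mem_nhds hW1)
    simpa using hE.p_open.image_mem_nhds hV₀
  refine Filter.mem_of_superset hτ ?_
  rintro τ ⟨⟨σ, ⟨hσV, hσW⟩, hσ⟩, hτW⟩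
  obtain ⟨b, hb⟩ := hP.ext.exists_ι_eq_of_p_eq_one (σ := τ * (F' σ)⁻¹) (by
    rw [map_mul, map_inv, hP.comm_p, hσ, mul_inv_cancel])
  refine ⟨(b, σ), ⟨hW'U ?_, hσV⟩, by simp only [hb, inv_mul_cancel_right]⟩
  rw [Set.mem_preimage, hb]
  exact hWW' (Set.mul_mem_mul hτW hσW)

end IsPushout

theorem IsPushout.comp {G A B C S S₁ S₂ : Type*} [Group G] [TopologicalSpace G]
    [AddCommGroup A] [TopologicalSpace A] [DistribMulAction G A]
    [AddCommGroup B] [TopologicalSpace B] [DistribMulAction G B]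
    [AddCommGroup C] [TopologicalSpace C] [DistribMulAction G C]
    [Group S] [TopologicalSpace S] [Group S₁] [TopologicalSpace S₁]
    [Group S₂] [TopologicalSpace S₂]
    {ι : A → S} {p : S →* G} {f : A → B} {ι₁ : B → S₁} {p₁ : S₁ →* G} {f₁ : S → S₁}
    {g : B → C} {ι₂ : C → S₂} {p₂ : S₂ →* G} {f₂ : S₁ → S₂}
    (h₁ : IsPushout ι p f ι₁ p₁ f₁) (h₂ : IsPushout ι₁ p₁ g ι₂ p₂ f₂) :
    IsPushout ι p (g ∘ f) ι₂ p₂ (f₂ ∘ f₁) where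
  ext := h₂.ext
  f'_cont := h₂.f'_cont.comp h₁.f'_cont
  f'_hom σ τ := by simp only [Function.comp_apply, h₁.f'_hom, h₂.f'_hom]
  comm_ι a := by simp only [Function.comp_apply, h₂.comm_ι, h₁.comm_ι]
  comm_p σ := by simp only [Function.comp_apply, h₂.comm_p, h₁.comm_p]

section PushoutMap

variable {G A B S S₂ S₃ : Type*} [Group G] [TopologicalSpace G]
  [AddCommGroup A] [TopologicalSpace A] [DistribMulAction G A]
  [AddCommGroup B] [TopologicalSpace B] [DistribMulAction G B]
  [Group S] [TopologicalSpace S] [Group S₂] [TopologicalSpace S₂] [Group S₃] [TopologicalSpace S₃]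

noncomputable def pushoutMap (ι₂ : B → S₂) (F₂ : S → S₂) (ι₃ : B → S₃) (F₃ : S → S₃)
    (τ : S₂) : S₃ :=
  let x := Classical.epsilon fun x : B × S => ι₂ x.1 * F₂ x.2 = τ
  ι₃ x.1 * F₃ x.2

variable {ι : A → S} {p : S →* G} {F : A → B}
  {ι₂ : B → S₂} {p₂ : S₂ →* G} {F₂ : S → S₂} {ι₃ : B → S₃} {p₃ : S₃ →* G} {F₃ : S → S₃}

theorem pushoutMap_ι_mul_f' (hE : IsCompatibleExtension ι p)
    (h₂ : IsPushout ι p F ι₂ p₂ F₂) (h₃ : IsPushout ι p F ι₃ p₃ F₃) (b : B) (σ : S) :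
    pushoutMap ι₂ F₂ ι₃ F₃ (ι₂ b * F₂ σ) = ι₃ b * F₃ σ := by
  have hx := Classical.epsilon_spec (p := fun x : B × S => ι₂ x.1 * F₂ x.2 = ι₂ b * F₂ σ)
    ⟨(b, σ), rfl⟩
  exact (h₃.ι_mul_f'_eq_iff hE).2 ((h₂.ι_mul_f'_eq_iff hE).1 hx)

theorem pushoutMap_mul (hE : IsCompatibleExtension ι p)
    (h₂ : IsPushout ι p F ι₂ p₂ F₂) (h₃ : IsPushout ι p F ι₃ p₃ F₃) (x y : S₂) :
    pushoutMap ι₂ F₂ ι₃ F₃ (x * y) = pushoutMap ι₂ F₂ ι₃ F₃ x * pushoutMap ι₂ F₂ ι₃ F₃ y := by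
  obtain ⟨b, σ, rfl⟩ := h₂.exists_ι_mul_f'_eq hE x
  obtain ⟨b', σ', rfl⟩ := h₂.exists_ι_mul_f'_eq hE y
  simp only [h₂.ι_mul_f'_mul_ι_mul_f', pushoutMap_ι_mul_f' hE h₂ h₃, h₃.ι_mul_f'_mul_ι_mul_f']

theorem pushoutMap_pushoutMap (hE : IsCompatibleExtension ι p)
    (h₂ : IsPushout ι p F ι₂ p₂ F₂) (h₃ : IsPushout ι p F ι₃ p₃ F₃) (x : S₂) :
    pushoutMap ι₃ F₃ ι₂ F₂ (pushoutMap ι₂ F₂ ι₃ F₃ x) = x := by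
  obtain ⟨b, σ, rfl⟩ := h₂.exists_ι_mul_f'_eq hE x
  rw [pushoutMap_ι_mul_f' hE h₂ h₃, pushoutMap_ι_mul_f' hE h₃ h₂]

theorem pushoutMap_ι (hE : IsCompatibleExtension ι p)
    (h₂ : IsPushout ι p F ι₂ p₂ F₂) (h₃ : IsPushout ι p F ι₃ p₃ F₃) (b : B) :
    pushoutMap ι₂ F₂ ι₃ F₃ (ι₂ b) = ι₃ b := by
  simpa only [h₂.f'_one, h₃.f'_one, mul_one] using pushoutMap_ι_mul_f' hE h₂ h₃ b 1

theorem pushoutMap_f' (hE : IsCompatibleExtension ι p)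
    (h₂ : IsPushout ι p F ι₂ p₂ F₂) (h₃ : IsPushout ι p F ι₃ p₃ F₃) (σ : S) :
    pushoutMap ι₂ F₂ ι₃ F₃ (F₂ σ) = F₃ σ := by
  simpa only [h₂.ext.ι_zero, h₃.ext.ι_zero, one_mul] using pushoutMap_ι_mul_f' hE h₂ h₃ 0 σ

theorem p_pushoutMap (hE : IsCompatibleExtension ι p)
    (h₂ : IsPushout ι p F ι₂ p₂ F₂) (h₃ : IsPushout ι p F ι₃ p₃ F₃) (x : S₂) :
    p₃ (pushoutMap ι₂ F₂ ι₃ F₃ x) = p₂ x := by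
  obtain ⟨b, σ, rfl⟩ := h₂.exists_ι_mul_f'_eq hE x
  simp only [pushoutMap_ι_mul_f' hE h₂ h₃, map_mul, h₂.ext.p_ι, h₃.ext.p_ι, h₂.comm_p, h₃.comm_p]

theorem continuous_pushoutMap (hE : IsCompatibleExtension ι p)
    (h₂ : IsPushout ι p F ι₂ p₂ F₂) (h₃ : IsPushout ι p F ι₃ p₃ F₃) :
    Continuous (pushoutMap ι₂ F₂ ι₃ F₃) := by
  have := h₂.ext.topGroup
  have := h₃.ext.topGroup
  refine continuous_of_continuousAt_one (MonoidHom.mk' _ (pushoutMap_mul hE h₂ h₃)) ?_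
  have hm₃ : Continuous fun x : B × S => ι₃ x.1 * F₃ x.2 :=
    (h₃.ext.ι_embedding.continuous.comp continuous_fst).mul (h₃.f'_cont.comp continuous_snd)
  have hφ₁ : pushoutMap ι₂ F₂ ι₃ F₃ 1 = 1 := by
    simpa only [h₂.f'_one, h₃.f'_one] using pushoutMap_f' hE h₂ h₃ 1
  calc (𝓝 1).map (pushoutMap ι₂ F₂ ι₃ F₃)
      ≤ ((𝓝 0 ×ˢ 𝓝 1).map fun x : B × S => ι₂ x.1 * F₂ x.2).map (pushoutMap ι₂ F₂ ι₃ F₃) :=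
        Filter.map_mono (h₂.nhds_one_le_map_ι_mul_f' hE)
    _ = (𝓝 0 ×ˢ 𝓝 1).map fun x : B × S => ι₃ x.1 * F₃ x.2 := by
        simp only [Filter.map_map, Function.comp_def, pushoutMap_ι_mul_f' hE h₂ h₃]
    _ ≤ 𝓝 (ι₃ 0 * F₃ 1) := by rw [← nhds_prod_eq]; exact hm₃.continuousAt
    _ = 𝓝 (pushoutMap ι₂ F₂ ι₃ F₃ 1) := by rw [h₃.ext.ι_zero, h₃.f'_one, one_mul, hφ₁]

end PushoutMap

noncomputable def IsPushout.continuousMulEquiv {G A B S S₂ S₃ : Type*} [Group G]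
    [TopologicalSpace G] [AddCommGroup A] [TopologicalSpace A] [DistribMulAction G A]
    [AddCommGroup B] [TopologicalSpace B] [DistribMulAction G B] [Group S] [TopologicalSpace S]
    [Group S₂] [TopologicalSpace S₂] [Group S₃] [TopologicalSpace S₃]
    {ι : A → S} {p : S →* G} {F : A → B} {ι₂ : B → S₂} {p₂ : S₂ →* G} {F₂ : S → S₂}
    {ι₃ : B → S₃} {p₃ : S₃ →* G} {F₃ : S → S₃} (hE : IsCompatibleExtension ι p)
    (h₂ : IsPushout ι p F ι₂ p₂ F₂) (h₃ : IsPushout ι p F ι₃ p₃ F₃) : S₂ ≃ₜ* S₃ where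
  toFun := pushoutMap ι₂ F₂ ι₃ F₃
  invFun := pushoutMap ι₃ F₃ ι₂ F₂
  left_inv := pushoutMap_pushoutMap hE h₂ h₃
  right_inv := pushoutMap_pushoutMap hE h₃ h₂
  map_mul' := pushoutMap_mul hE h₂ h₃
  continuous_toFun := continuous_pushoutMap hE h₂ h₃
  continuous_invFun := continuous_pushoutMap hE h₃ h₂

theorem pushout_comp_general
    {G A B C S S₁ S₂ S₃ : Type*}
    [Group G] [TopologicalSpace G]
    [AddCommGroup A] [TopologicalSpace A] [DistribMulAction G A]
    [AddCommGroup B] [TopologicalSpace B] [DistribMulAction G B]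
    [AddCommGroup C] [TopologicalSpace C] [DistribMulAction G C]
    [Group S] [TopologicalSpace S]
    [Group S₁] [TopologicalSpace S₁]
    [Group S₂] [TopologicalSpace S₂]
    [Group S₃] [TopologicalSpace S₃]
    (ι : A → S) (p : S →* G) (hE : IsCompatibleExtension ι p)
    (f : A → B) (g : B → C)
    (ι₁ : B → S₁) (p₁ : S₁ →* G) (f₁ : S → S₁)
    (ι₂ : C → S₂) (p₂ : S₂ →* G) (f₂ : S₁ → S₂)
    (ι₃ : C → S₃) (p₃ : S₃ →* G) (f₃ : S → S₃)
    (h₁ : IsPushout ι p f ι₁ p₁ f₁)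
    (h₂ : IsPushout ι₁ p₁ g ι₂ p₂ f₂)
    (h₃ : IsPushout ι p (g ∘ f) ι₃ p₃ f₃) :
    ∃ h : S₂ ≃ₜ S₃,
      (∀ x y : S₂, h (x * y) = h x * h y) ∧
      (∀ c : C, h (ι₂ c) = ι₃ c) ∧
      (∀ x : S₂, p₃ (h x) = p₂ x) ∧
      (∀ σ : S, h (f₂ (f₁ σ)) = f₃ σ) := by
  have h₁₂ : IsPushout ι p (g ∘ f) ι₂ p₂ (f₂ ∘ f₁) := h₁.comp h₂
  exact ⟨(h₁₂.continuousMulEquiv hE h₃).toHomeomorph, pushoutMap_mul hE h₁₂ h₃,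
    pushoutMap_ι hE h₁₂ h₃, p_pushoutMap hE h₁₂ h₃, pushoutMap_f' hE h₁₂ h₃⟩

/-- (Compositionality of pushouts; group case.)  Let
`(Σ, ι, p)` be a compatible extension of `G` by `A` (all groups locally
compact Hausdorff) and let `f : A → B`, `g : B → C` be continuous
`G`-equivariant homomorphisms.  If `(Σ₁, f₁)` is an `f`-pushout of
`(Σ, ι, p)`, `(Σ₂, f₂)` is a `g`-pushout of `(Σ₁, ι₁, p₁)`, and `(Σ₃, f₃)`
is a `(g ∘ f)`-pushout of `(Σ, ι, p)`, then there is an isomorphism of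
topological groups `h : Σ₂ → Σ₃` with `h ∘ ι₂ = ι₃`, `p₃ ∘ h = p₂` and
`h ∘ f₂ ∘ f₁ = f₃`; that is, `g₊(f₊Σ)` is properly isomorphic to
`(g ∘ f)₊Σ`. -/
theorem pushout_comp
    {G A B C S S₁ S₂ S₃ : Type*}
    [Group G] [TopologicalSpace G] [IsTopologicalGroup G]
    [LocallyCompactSpace G] [T2Space G]
    [AddCommGroup A] [TopologicalSpace A] [IsTopologicalAddGroup A]
    [LocallyCompactSpace A] [T2Space A]
    [DistribMulAction G A] [ContinuousSMul G A]
    [AddCommGroup B] [TopologicalSpace B] [IsTopologicalAddGroup B]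
    [LocallyCompactSpace B] [T2Space B]
    [DistribMulAction G B] [ContinuousSMul G B]
    [AddCommGroup C] [TopologicalSpace C] [IsTopologicalAddGroup C]
    [LocallyCompactSpace C] [T2Space C]
    [DistribMulAction G C] [ContinuousSMul G C]
    [Group S] [TopologicalSpace S] [IsTopologicalGroup S]
    [LocallyCompactSpace S] [T2Space S]
    [Group S₁] [TopologicalSpace S₁] [LocallyCompactSpace S₁] [T2Space S₁]
    [Group S₂] [TopologicalSpace S₂] [LocallyCompactSpace S₂] [T2Space S₂]
    [Group S₃] [TopologicalSpace S₃] [LocallyCompactSpace S₃] [T2Space S₃]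
    (ι : A → S) (p : S →* G) (hE : IsCompatibleExtension ι p)
    (f : A → B) (hf_cont : Continuous f)
    (hf_hom : ∀ a a', f (a + a') = f a + f a')
    (hf_equiv : ∀ (g : G) (a : A), f (g • a) = g • f a)
    (g : B → C) (hg_cont : Continuous g)
    (hg_hom : ∀ b b', g (b + b') = g b + g b')
    (hg_equiv : ∀ (x : G) (b : B), g (x • b) = x • g b)
    (ι₁ : B → S₁) (p₁ : S₁ →* G) (f₁ : S → S₁)
    (ι₂ : C → S₂) (p₂ : S₂ →* G) (f₂ : S₁ → S₂)
    (ι₃ : C → S₃) (p₃ : S₃ →* G) (f₃ : S → S₃)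
    (h₁ : IsPushout ι p f ι₁ p₁ f₁)
    (h₂ : IsPushout ι₁ p₁ g ι₂ p₂ f₂)
    (h₃ : IsPushout ι p (g ∘ f) ι₃ p₃ f₃) :
    ∃ h : S₂ ≃ₜ S₃,
      (∀ x y : S₂, h (x * y) = h x * h y) ∧
      (∀ c : C, h (ι₂ c) = ι₃ c) ∧
      (∀ x : S₂, p₃ (h x) = p₂ x) ∧
      (∀ σ : S, h (f₂ (f₁ σ)) = f₃ σ) :=
  pushout_comp_general ι p hE f g ι₁ p₁ f₁ ι₂ p₂ f₂ ι₃ p₃ f₃ h₁ h₂ h₃
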